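/- arXiv:2009.02732 — 2 statements merged into one kernel-verified Lean document; each statement's English description precedes it below -/
import Mathlib

section
/- Let A be an invertible d×d real matrix, C = AᵀA, and let u₁, u₂ ∈ ℝᵈ be orthonormal vectors. Define hᵢ = uᵢᵀ C uᵢ, γᵢ = ((h₁h₂)/hᵢ²)^{1/4}, and G = I + (γ₁−1)u₁u₁ᵀ + (γ₂−1)u₂u₂ᵀ. Then trace(C) − trace(G C G) = h₁ + h₂ − 2√(h₁h₂) ≥ 0. -/
open Matrix Real

section aux

variable {n : Type*} [Fintype n] [DecidableEq n]

lemma my_trace_vecMulVec (u v : n → ℝ) : (vecMulVec u v).trace = u ⬝ᵥ v := by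
  simp [Matrix.trace, Matrix.diag, vecMulVec_apply, dotProduct]

lemma my_vecMulVec_mul (u v : n → ℝ) (M : Matrix n n ℝ) :
    vecMulVec u v * M = vecMulVec u (v ᵥ* M) := by
  ext i j
  simp only [Matrix.mul_apply, vecMulVec_apply, Matrix.vecMul, dotProduct, Finset.mul_sum]
  exact Finset.sum_congr rfl fun x _ => by ring

lemma my_mul_vecMulVec (u v : n → ℝ) (M : Matrix n n ℝ) :
    M * vecMulVec u v = vecMulVec (M *ᵥ u) v := by
  ext i j
  simp only [Matrix.mul_apply, vecMulVec_apply, Matrix.mulVec, dotProduct, Finset.sum_mul]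
  exact Finset.sum_congr rfl fun x _ => by ring

lemma my_vecMul_vecMulVec (x u v : n → ℝ) :
    x ᵥ* vecMulVec u v = (x ⬝ᵥ u) • v := by
  ext j
  simp [Matrix.vecMul, vecMulVec_apply, dotProduct, Finset.sum_mul, mul_assoc]

lemma my_vecMulVec_smul (u : n → ℝ) (c : ℝ) (v : n → ℝ) :
    vecMulVec u (c • v) = c • vecMulVec u v := by
  ext i j
  simp [vecMulVec_apply, smul_eq_mul]
  ring

lemma my_vecMulVec_mulVec (u v w : n → ℝ) :
    vecMulVec u v *ᵥ w = (v ⬝ᵥ w) • u := by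
  ext i
  simp only [Matrix.mulVec, vecMulVec_apply, dotProduct, Pi.smul_apply, smul_eq_mul,
    Finset.sum_mul]
  exact Finset.sum_congr rfl fun x _ => by ring

end aux

theorem heES_trace_reduction (d : ℕ) (hd : 2 ≤ d)
    (A : Matrix (Fin d) (Fin d) ℝ) (hA : IsUnit A.det)
    (u₁ u₂ : Fin d → ℝ)
    (hu₁ : u₁ ⬝ᵥ u₁ = 1) (hu₂ : u₂ ⬝ᵥ u₂ = 1) (horth : u₁ ⬝ᵥ u₂ = 0)
    (C : Matrix (Fin d) (Fin d) ℝ) (hC : C = Aᵀ * A)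
    (h₁ h₂ : ℝ) (hh₁ : h₁ = u₁ ⬝ᵥ C.mulVec u₁) (hh₂ : h₂ = u₂ ⬝ᵥ C.mulVec u₂)
    (γ₁ γ₂ : ℝ)
    (hγ₁ : γ₁ = ((h₁ * h₂) / h₁ ^ 2) ^ ((1:ℝ)/4))
    (hγ₂ : γ₂ = ((h₁ * h₂) / h₂ ^ 2) ^ ((1:ℝ)/4))
    (G : Matrix (Fin d) (Fin d) ℝ)
    (hG : G = 1 + (γ₁ - 1) • vecMulVec u₁ u₁ + (γ₂ - 1) • vecMulVec u₂ u₂) :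
    C.trace - (G * C * G).trace = h₁ + h₂ - 2 * Real.sqrt (h₁ * h₂) ∧
      0 ≤ h₁ + h₂ - 2 * Real.sqrt (h₁ * h₂) := by
  -- positivity of h₁, h₂
  have hinj : Function.Injective A.mulVec := by
    rw [Matrix.mulVec_injective_iff_isUnit]
    exact (Matrix.isUnit_iff_isUnit_det A).mpr hA
  have key : ∀ u : Fin d → ℝ, u ⬝ᵥ u = 1 → 0 < u ⬝ᵥ C.mulVec u := by
    intro u hu
    have hu0 : u ≠ 0 := by
      intro h
      rw [h] at hu
      simp at hu
    have hw0 : A.mulVec u ≠ 0 := by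
      intro h
      apply hu0
      apply hinj
      rw [h, Matrix.mulVec_zero]
    have : u ⬝ᵥ C.mulVec u = (A.mulVec u) ⬝ᵥ (A.mulVec u) := by
      rw [hC, Matrix.dotProduct_mulVec, ← Matrix.vecMul_vecMul, Matrix.vecMul_transpose,
        ← Matrix.dotProduct_mulVec]
    rw [this]
    rcases Function.ne_iff.mp hw0 with ⟨i, hi⟩
    have : 0 < A.mulVec u i * A.mulVec u i := mul_self_pos.mpr hi
    calc 0 < A.mulVec u i * A.mulVec u i := this
    _ ≤ (A.mulVec u) ⬝ᵥ (A.mulVec u) := by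
        unfold dotProduct
        exact Finset.single_le_sum (f := fun j => A.mulVec u j * A.mulVec u j)
          (fun j _ => mul_self_nonneg _) (Finset.mem_univ i)
  have hp₁ : 0 < h₁ := hh₁ ▸ key u₁ hu₁
  have hp₂ : 0 < h₂ := hh₂ ▸ key u₂ hu₂
  have hprod : (0:ℝ) ≤ h₁ * h₂ := le_of_lt (mul_pos hp₁ hp₂)
  -- γ squared values
  have hg1 : γ₁ ^ 2 * h₁ = Real.sqrt (h₁ * h₂) := by
    rw [hγ₁, ← Real.rpow_natCast (((h₁ * h₂) / h₁ ^ 2) ^ ((1:ℝ)/4)) 2,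
      ← Real.rpow_mul (div_nonneg hprod (sq_nonneg _))]
    norm_num
    rw [← Real.sqrt_eq_rpow, Real.sqrt_div hprod _, Real.sqrt_sq hp₁.le]
    field_simp
  have hg2 : γ₂ ^ 2 * h₂ = Real.sqrt (h₁ * h₂) := by
    rw [hγ₂, ← Real.rpow_natCast (((h₁ * h₂) / h₂ ^ 2) ^ ((1:ℝ)/4)) 2,
      ← Real.rpow_mul (div_nonneg hprod (sq_nonneg _))]
    norm_num
    rw [← Real.sqrt_eq_rpow, Real.sqrt_div hprod _, Real.sqrt_sq hp₂.le]
    field_simp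
  -- trace computation
  have horth' : u₂ ⬝ᵥ u₁ = 0 := by rwa [dotProduct_comm] at horth
  have htr : (G * C * G).trace = C.trace + (γ₁ ^ 2 - 1) * h₁ + (γ₂ ^ 2 - 1) * h₂ := by
    subst hG
    simp only [Matrix.add_mul, Matrix.mul_add, Matrix.smul_mul, Matrix.mul_smul, Matrix.one_mul,
      Matrix.mul_one, my_vecMulVec_mul, my_mul_vecMulVec, my_vecMul_vecMulVec, my_vecMulVec_smul,
      Matrix.trace_add, Matrix.trace_smul, my_trace_vecMulVec, smul_eq_mul, smul_smul]
    have d11 : (u₁ ᵥ* C) ⬝ᵥ u₁ = h₁ := by rw [← Matrix.dotProduct_mulVec, ← hh₁]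
    have d22 : (u₂ ᵥ* C) ⬝ᵥ u₂ = h₂ := by rw [← Matrix.dotProduct_mulVec, ← hh₂]
    have dC1 : C *ᵥ u₁ ⬝ᵥ u₁ = h₁ := by rw [dotProduct_comm, ← hh₁]
    have dC2 : C *ᵥ u₂ ⬝ᵥ u₂ = h₂ := by rw [dotProduct_comm, ← hh₂]
    have dA : u₁ ⬝ᵥ u₁ ᵥ* C = h₁ := by rw [dotProduct_comm]; exact d11
    have dB : u₂ ⬝ᵥ u₂ ᵥ* C = h₂ := by rw [dotProduct_comm]; exact d22
    simp only [my_vecMulVec_mulVec, smul_dotProduct, smul_eq_mul, d11, d22, dC1, dC2,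
      dA, dB, horth, horth', hu₁, hu₂, mul_zero, mul_one]
    ring
  constructor
  · rw [htr]
    nlinarith [hg1, hg2]
  · have h1 := Real.sq_sqrt hp₁.le
    have h2 := Real.sq_sqrt hp₂.le
    have hm : Real.sqrt (h₁ * h₂) = Real.sqrt h₁ * Real.sqrt h₂ := Real.sqrt_mul hp₁.le h₂
    nlinarith [sq_nonneg (Real.sqrt h₁ - Real.sqrt h₂)]
end

section
/- Define the pre-metric δ(A,B) = tr((A/det(A)^{1/d})·(B⁻¹/det(B⁻¹)^{1/d})) − d on symmetric positive definite d×d matrices. Then δ(A,B) ≥ 0 for all such A, B, δ(A,A) = 0, and δ(A,B) = 0 if and only if A is a positive scalar multiple of B. -/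
/-!
Write `B⁻¹ = Pᴴ P` with `P` invertible and put `X = P A Pᴴ`, a positive definite matrix
with `tr X = tr (A B⁻¹)` and `det X = det A · det B⁻¹`. Then
`δ(A, B) = tr X / (det X)^{1/d} - d`, and AM-GM on the eigenvalues of `X` gives `δ ≥ 0`,
with equality iff all eigenvalues of `X` coincide, i.e. `X = c • 1`, i.e. `A = c • B`.
-/

open Matrix

noncomputable def preMetricDelta (d : ℕ) (A B : Matrix (Fin d) (Fin d) ℝ) : ℝ :=
  (((A.det ^ ((1:ℝ)/d))⁻¹ • A) * (((B⁻¹).det ^ ((1:ℝ)/d))⁻¹ • B⁻¹)).trace - d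

namespace Matrix

variable {n : Type*} [Fintype n] [DecidableEq n]

lemma IsHermitian.eq_smul_one_of_eigenvalues_eq {𝕜 : Type*} [RCLike 𝕜] {A : Matrix n n 𝕜}
    (hA : A.IsHermitian) {c : ℝ} (h : ∀ i, hA.eigenvalues i = c) : A = (c : 𝕜) • 1 := by
  rw [hA.spectral_theorem, show RCLike.ofReal ∘ hA.eigenvalues = fun _ => (c : 𝕜) from
    funext fun i => by simp [h], ← smul_one_eq_diagonal]
  simp [Unitary.conjStarAlgAut_apply]

section
open scoped ComplexOrder MatrixOrder

lemma PosDef.exists_isUnit_star_mul_self_eq {𝕜 : Type*} [RCLike 𝕜] {M : Matrix n n 𝕜}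
    (hM : M.PosDef) : ∃ P : Matrix n n 𝕜, IsUnit P ∧ star P * P = M := by
  refine ⟨CFC.sqrt M, hM.isStrictlyPositive.isUnit_cfcSqrt, ?_⟩
  rw [(CFC.sqrt_nonneg M).isSelfAdjoint.star_eq, CFC.sqrt_mul_sqrt_self M hM.posSemidef.nonneg]

end

lemma mul_mul_star_eq_smul_one_iff {R : Type*} [CommRing R] [StarRing R] {P B : Matrix n n R}
    (hP : IsUnit P) (hB : IsUnit B) (hPB : star P * P = B⁻¹) (A : Matrix n n R) (c : R) :
    P * A * star P = c • 1 ↔ A = c • B := by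
  have hconj : P * B * star P = 1 := by
    refine hP.mul_right_cancel ?_
    rw [Matrix.mul_assoc, Matrix.mul_assoc, hPB,
      mul_nonsing_inv B ((isUnit_iff_isUnit_det B).1 hB), Matrix.mul_one, Matrix.one_mul]
  rw [← hconj, ← smul_mul_assoc, ← mul_smul_comm]
  exact ⟨fun h => hP.mul_left_cancel (hP.star.mul_right_cancel h), by rintro rfl; rfl⟩

namespace PosDef

variable {A : Matrix n n ℝ} (hA : A.PosDef)
include hA

lemma det_rpow_eq_prod_eigenvalues_rpow (r : ℝ) :
    A.det ^ r = ∏ i, hA.1.eigenvalues i ^ r := by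
  rw [hA.1.det_eq_prod_eigenvalues]
  exact (Real.finsetProd_rpow _ _ (fun i _ => (hA.eigenvalues_pos i).le) r).symm

lemma trace_eq_card_mul_sum_eigenvalues [Nonempty n] :
    A.trace = Fintype.card n * ∑ i, (1 / Fintype.card n : ℝ) * hA.1.eigenvalues i := by
  rw [← Finset.mul_sum, ← mul_assoc, mul_one_div_cancel (by positivity), one_mul,
    hA.1.trace_eq_sum_eigenvalues]
  rfl

theorem card_mul_det_rpow_le_trace :
    Fintype.card n * A.det ^ (1 / Fintype.card n : ℝ) ≤ A.trace := by
  cases isEmpty_or_nonempty n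
  · simp [trace]
  rw [hA.trace_eq_card_mul_sum_eigenvalues, hA.det_rpow_eq_prod_eigenvalues_rpow]
  gcongr
  refine Real.geom_mean_le_arith_mean_weighted _ _ _ (fun _ _ => by positivity) ?_
    (fun i _ => (hA.eigenvalues_pos i).le)
  simp [Finset.card_univ]

theorem trace_eq_card_mul_det_rpow_iff :
    A.trace = Fintype.card n * A.det ^ (1 / Fintype.card n : ℝ) ↔
      ∃ c : ℝ, 0 < c ∧ A = c • 1 := by
  cases isEmpty_or_nonempty n
  · exact iff_of_true (by simp [trace]) ⟨1, one_pos, Subsingleton.elim _ _⟩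
  constructor
  · intro h
    set s := ∑ i, (1 / Fintype.card n : ℝ) * hA.1.eigenvalues i
    have hmean : ∏ i, hA.1.eigenvalues i ^ (1 / Fintype.card n : ℝ) = s := by
      rw [hA.trace_eq_card_mul_sum_eigenvalues, hA.det_rpow_eq_prod_eigenvalues_rpow] at h
      exact (mul_left_cancel₀ (by positivity) h).symm
    have hconst : ∀ j, hA.1.eigenvalues j = s := fun j =>
      (Real.geom_mean_eq_arith_mean_weighted_iff_of_pos' _ _ _ (fun _ _ => by positivity)
        (by simp [Finset.card_univ]) (fun i _ => (hA.eigenvalues_pos i).le)).1 hmean j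
        (Finset.mem_univ j)
    obtain ⟨i⟩ := ‹Nonempty n›
    exact ⟨s, hconst i ▸ hA.eigenvalues_pos i, hA.1.eq_smul_one_of_eigenvalues_eq hconst⟩
  · rintro ⟨c, hc, rfl⟩
    rw [trace_smul, trace_one, det_smul, det_one, mul_one, smul_eq_mul, one_div,
      Real.pow_rpow_inv_natCast hc.le Fintype.card_ne_zero, mul_comm]

end PosDef

end Matrix

section

variable {d : ℕ} {A B : Matrix (Fin d) (Fin d) ℝ}

lemma preMetricDelta_eq_of_star_mul_self_eq_inv (hA : A.PosDef) (hB : B.PosDef)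
    {P : Matrix (Fin d) (Fin d) ℝ} (hP : star P * P = B⁻¹) :
    preMetricDelta d A B =
      (P * A * star P).trace / (P * A * star P).det ^ (1 / d : ℝ) - d := by
  have htrace : (P * A * star P).trace = (A * B⁻¹).trace := by
    rw [trace_mul_comm, ← Matrix.mul_assoc, hP, trace_mul_comm]
  have hdet : (P * A * star P).det = A.det * B⁻¹.det := by
    rw [← hP, det_mul, det_mul, det_mul]; ring
  rw [htrace, hdet, Real.mul_rpow hA.det_pos.le hB.inv.det_pos.le, preMetricDelta,
    smul_mul_smul_comm, trace_smul, smul_eq_mul, ← mul_inv, inv_mul_eq_div]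

theorem preMetricDelta_nonneg (hA : A.PosDef) (hB : B.PosDef) : 0 ≤ preMetricDelta d A B := by
  obtain ⟨P, hPu, hP⟩ := hB.inv.exists_isUnit_star_mul_self_eq
  have hX : (P * A * star P).PosDef := hPu.posDef_star_right_conjugate_iff.2 hA
  rw [preMetricDelta_eq_of_star_mul_self_eq_inv hA hB hP, sub_nonneg,
    le_div_iff₀ (Real.rpow_pos_of_pos hX.det_pos _)]
  simpa using hX.card_mul_det_rpow_le_trace

theorem preMetricDelta_eq_zero_iff (hA : A.PosDef) (hB : B.PosDef) :
    preMetricDelta d A B = 0 ↔ ∃ c : ℝ, 0 < c ∧ A = c • B := by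
  obtain ⟨P, hPu, hP⟩ := hB.inv.exists_isUnit_star_mul_self_eq
  have hX : (P * A * star P).PosDef := hPu.posDef_star_right_conjugate_iff.2 hA
  have hAMGM := hX.trace_eq_card_mul_det_rpow_iff
  rw [Fintype.card_fin] at hAMGM
  rw [preMetricDelta_eq_of_star_mul_self_eq_inv hA hB hP, sub_eq_zero,
    div_eq_iff (Real.rpow_pos_of_pos hX.det_pos _).ne', hAMGM]
  simp_rw [mul_mul_star_eq_smul_one_iff hPu hB.isUnit hP]

theorem preMetricDelta_self (hA : A.PosDef) : preMetricDelta d A A = 0 :=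
  (preMetricDelta_eq_zero_iff hA hA).2 ⟨1, one_pos, (one_smul ℝ A).symm⟩

end

theorem preMetricDelta_properties_general (d : ℕ) :
    (∀ A B : Matrix (Fin d) (Fin d) ℝ, A.PosDef → B.PosDef →
      0 ≤ preMetricDelta d A B) ∧
    (∀ A : Matrix (Fin d) (Fin d) ℝ, A.PosDef → preMetricDelta d A A = 0) ∧
    (∀ A B : Matrix (Fin d) (Fin d) ℝ, A.PosDef → B.PosDef →
      (preMetricDelta d A B = 0 ↔ ∃ c : ℝ, 0 < c ∧ A = c • B)) :=
  ⟨fun _ _ => preMetricDelta_nonneg, fun _ => preMetricDelta_self,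
    fun _ _ => preMetricDelta_eq_zero_iff⟩

theorem preMetricDelta_properties (d : ℕ) (hd : 1 ≤ d) :
    (∀ A B : Matrix (Fin d) (Fin d) ℝ, A.PosDef → B.PosDef →
      0 ≤ preMetricDelta d A B) ∧
    (∀ A : Matrix (Fin d) (Fin d) ℝ, A.PosDef → preMetricDelta d A A = 0) ∧
    (∀ A B : Matrix (Fin d) (Fin d) ℝ, A.PosDef → B.PosDef →
      (preMetricDelta d A B = 0 ↔ ∃ c : ℝ, 0 < c ∧ A = c • B)) :=
  preMetricDelta_properties_general d
end
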